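/- Let (A, ·, ε, α, R) be a Rota-Baxter Hom-associative color algebra of weight λ. Define x⊣y = x·R(y), x⊢y = ε(x,y)R(x)·y, and x∗y = λ ε(x,y) x·y. Then (A, ⊣, ⊢, ∗, ε, α) is a Hom-tridendriform color algebra. -/
import Mathlib


section
variable {K G A : Type*} [Field K] [AddCommGroup G] [AddCommGroup A] [Module K A]

/-- x ⊣ y = x · R(y). -/
def rbL (μ : A →ₗ[K] A →ₗ[K] A) (R : A →ₗ[K] A) (x y : A) : A := μ x (R y)

/-- x ⊢ y = ε(x,y) R(x) · y, for x, y of degrees a, b. -/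
def rbR (ε : G → G → K) (μ : A →ₗ[K] A →ₗ[K] A) (R : A →ₗ[K] A) (a b : G) (x y : A) : A :=
  ε a b • μ (R x) y

/-- x ∗ y = λ ε(x,y) x · y, for x, y of degrees a, b. -/
def rbS (ε : G → G → K) (μ : A →ₗ[K] A →ₗ[K] A) (lam : K) (a b : G) (x y : A) : A :=
  (lam * ε a b) • μ x y

end

/-- a Rota-Baxter Hom-associative color algebra of weight λ gives a
Hom-tridendriform color algebra via x⊣y = x·R(y), x⊢y = ε(x,y)R(x)·y,
x∗y = λ ε(x,y) x·y. -/
theorem stmt_10 {K G A : Type*} [Field K] [AddCommGroup G] [AddCommGroup A] [Module K A]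
    (ε : G → G → K) (𝒜 : G → Submodule K A)
    (hεs : ∀ a b, ε a b * ε b a = 1)
    (hεr : ∀ a b c, ε a (b + c) = ε a b * ε a c)
    (hεl : ∀ a b c, ε (a + b) c = ε a c * ε b c)
    (μ : A →ₗ[K] A →ₗ[K] A) (α R : A →ₗ[K] A) (lam : K)
    (hμ : ∀ a b : G, ∀ x ∈ 𝒜 a, ∀ y ∈ 𝒜 b, μ x y ∈ 𝒜 (a + b))
    (hα : ∀ a : G, ∀ x ∈ 𝒜 a, α x ∈ 𝒜 a)
    (hR : ∀ a : G, ∀ x ∈ 𝒜 a, R x ∈ 𝒜 a)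
    (hassoc : ∀ a b c : G, ∀ x ∈ 𝒜 a, ∀ y ∈ 𝒜 b, ∀ z ∈ 𝒜 c,
      μ (α x) (μ y z) = μ (μ x y) (α z))
    (hRα : ∀ x : A, R (α x) = α (R x))
    (hRB : ∀ a b : G, ∀ x ∈ 𝒜 a, ∀ y ∈ 𝒜 b,
      μ (R x) (R y) = R (μ (R x) y + μ x (R y) + lam • μ x y)) :
    -- Hom-tridendriform color algebra axioms
    ∀ a b c : G, ∀ x ∈ 𝒜 a, ∀ y ∈ 𝒜 b, ∀ z ∈ 𝒜 c,
      (rbL μ R (rbL μ R x y) (α z)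
        = rbL μ R (α x) (rbL μ R y z + ε c b • rbR ε μ R b c y z
            + ε c b • rbS ε μ lam b c y z)) ∧
      (rbL μ R (rbR ε μ R a b x y) (α z)
        = ε c a • rbR ε μ R a (b + c) (α x) (rbL μ R y z)) ∧
      (rbR ε μ R a (b + c) (α x) (rbR ε μ R b c y z)
        = rbR ε μ R (a + b) c
            (ε a b • rbL μ R x y + rbR ε μ R a b x y + rbS ε μ lam a b x y) (α z)) ∧
      (rbS ε μ lam (a + b) c (rbL μ R x y) (α z)
        = ε b a • rbS ε μ lam a (b + c) (α x) (rbR ε μ R b c y z)) ∧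
      (rbS ε μ lam (a + b) c (rbR ε μ R a b x y) (α z)
        = rbR ε μ R a (b + c) (α x) (rbS ε μ lam b c y z)) ∧
      (rbL μ R (rbS ε μ lam a b x y) (α z)
        = ε c a • rbS ε μ lam a (b + c) (α x) (rbL μ R y z)) ∧
      (rbS ε μ lam (a + b) c (rbS ε μ lam a b x y) (α z)
        = rbS ε μ lam a (b + c) (α x) (rbS ε μ lam b c y z))  := by
  intro a b c x hx y hy z hz
  have hRx := hR a x hx
  have hRy := hR b y hy
  have hRz := hR c z hz
  have e1 := hεs a b
  have e2 := hεs a c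
  have e3 := hεs b c
  refine ⟨?_, ?_, ?_, ?_, ?_, ?_, ?_⟩
  · simp only [rbL, rbR, rbS, hRα, hεr, hεl, map_add, map_smul, LinearMap.add_apply,
      LinearMap.smul_apply, smul_smul]
    rw [← hassoc a b c x hx (R y) hRy (R z) hRz, hRB b c y hy z hz]
    simp only [map_add, map_smul, smul_smul]
    match_scalars <;> first | ring1 | linear_combination -e3 | linear_combination (-lam) * e3
  · simp only [rbL, rbR, rbS, hRα, hεr, hεl, map_add, map_smul, LinearMap.add_apply,
      LinearMap.smul_apply, smul_smul]
    rw [← hassoc a b c (R x) hRx y hy (R z) hRz]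
    match_scalars
    linear_combination (-ε a b) * e2
  · simp only [rbL, rbR, rbS, hRα, hεr, hεl, map_add, map_smul, LinearMap.add_apply,
      LinearMap.smul_apply, smul_smul]
    rw [hassoc a b c (R x) hRx (R y) hRy z hz, hRB a b x hx y hy]
    simp only [map_add, map_smul, LinearMap.add_apply, LinearMap.smul_apply, smul_smul]
    match_scalars <;> ring
  · simp only [rbL, rbR, rbS, hRα, hεr, hεl, map_add, map_smul, LinearMap.add_apply,
      LinearMap.smul_apply, smul_smul]
    rw [← hassoc a b c x hx (R y) hRy z hz]
    match_scalars
    linear_combination (-(lam * ε a c * ε b c)) * e1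
  · simp only [rbL, rbR, rbS, hRα, hεr, hεl, map_add, map_smul, LinearMap.add_apply,
      LinearMap.smul_apply, smul_smul]
    rw [← hassoc a b c (R x) hRx y hy z hz]
    match_scalars
    ring
  · simp only [rbL, rbR, rbS, hRα, hεr, hεl, map_add, map_smul, LinearMap.add_apply,
      LinearMap.smul_apply, smul_smul]
    rw [← hassoc a b c x hx y hy (R z) hRz]
    match_scalars
    linear_combination (-(lam * ε a b)) * e2
  · simp only [rbL, rbR, rbS, hRα, hεr, hεl, map_add, map_smul, LinearMap.add_apply,
      LinearMap.smul_apply, smul_smul]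
    rw [← hassoc a b c x hx y hy z hz]
    match_scalars
    ring
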